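/- arXiv:2408.08012 — 2 statements merged into one kernel-verified Lean document; each statement's English description precedes it below -/
import Mathlib

section
/- For x any one of the three elements ξ, η, ξη of Λ, the element 1−x is a non-zero-divisor of Λ: if f ∈ Λ satisfies f·(1−x) = 0, then f = 0. Equivalently, the cyclic Λ-module Λ(1−x) is free. (First part of the lemma in Section 3.4 of the paper.) -/
namespace adelicHGF

/-- `Δ_N`: the multiplicative group `(ℤ/Nℤ) × (ℤ/Nℤ)`. -/
abbrev Delta (N : ℕ) : Type := Multiplicative (ZMod N × ZMod N)

/-- The group ring `(ℤ/nℤ)[Δ_N]`. -/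
abbrev GR (N n : ℕ) : Type := MonoidAlgebra (ZMod n) (Delta N)

/-- The reduction map `Δ_M → Δ_N` for `N ∣ M`. -/
def deltaMap {M N : ℕ} (h : N ∣ M) : Delta M →* Delta N :=
  AddMonoidHom.toMultiplicative
    (((ZMod.castHom h (ZMod N)).toAddMonoidHom).prodMap
      ((ZMod.castHom h (ZMod N)).toAddMonoidHom))

/-- The transition ring homomorphism `(ℤ/mℤ)[Δ_M] → (ℤ/nℤ)[Δ_N]` for `N ∣ M` and `n ∣ m`,
induced by the reduction maps `Δ_M → Δ_N` and `ℤ/mℤ → ℤ/nℤ`. -/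
noncomputable def transGR {N M n m : ℕ} (hNM : N ∣ M) (hnm : n ∣ m) : GR M m →+* GR N n :=
  MonoidAlgebra.liftNCRingHom
    ((MonoidAlgebra.singleOneRingHom).comp (ZMod.castHom hnm (ZMod n)))
    ((MonoidAlgebra.of (ZMod n) (Delta N)).comp (deltaMap hNM))
    (fun _ _ => Commute.all _ _)

lemma transGR_of {N M n m : ℕ} (hNM : N ∣ M) (hnm : n ∣ m) (g : Delta M) :
    transGR hNM hnm (MonoidAlgebra.of (ZMod m) (Delta M) g) =
      MonoidAlgebra.of (ZMod n) (Delta N) (deltaMap hNM g) := by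
  simp [transGR, MonoidAlgebra.liftNCRingHom, ZMod.cast_one hnm]

/-- `Λ = Ẑ[[Δ_∞]]`, realized as the subring of `∏_{(N,n)} (ℤ/nℤ)[Δ_N]` consisting of families
compatible with the transition maps. -/
noncomputable def Lambda : Subring (∀ p : ℕ+ × ℕ+, GR p.1 p.2) where
  carrier := {f | ∀ (N M n m : ℕ+) (hNM : (N : ℕ) ∣ (M : ℕ)) (hnm : (n : ℕ) ∣ (m : ℕ)),
    transGR hNM hnm (f (M, m)) = f (N, n)}
  mul_mem' := by
    intro f g hf hg N M n m hNM hnm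
    simp only [Pi.mul_apply, map_mul, hf N M n m hNM hnm, hg N M n m hNM hnm]
  one_mem' := by
    intro N M n m hNM hnm
    simp only [Pi.one_apply, map_one]
  add_mem' := by
    intro f g hf hg N M n m hNM hnm
    simp only [Pi.add_apply, map_add, hf N M n m hNM hnm, hg N M n m hNM hnm]
  zero_mem' := by
    intro N M n m hNM hnm
    simp only [Pi.zero_apply, map_zero]
  neg_mem' := by
    intro f hf N M n m hNM hnm
    simp only [Pi.neg_apply, map_neg, hf N M n m hNM hnm]

lemma deltaMap_ofAdd {M N : ℕ} (h : N ∣ M) (p : ZMod M × ZMod M) :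
    deltaMap h (Multiplicative.ofAdd p) =
      Multiplicative.ofAdd (ZMod.castHom h (ZMod N) p.1, ZMod.castHom h (ZMod N) p.2) := rfl

/-- The element `ξ = (ξ_N)_N` of `Λ`. -/
noncomputable def xiL : Lambda :=
  ⟨fun p => MonoidAlgebra.of (ZMod p.2) (Delta p.1)
      (Multiplicative.ofAdd ((1 : ZMod p.1), (0 : ZMod p.1))), by
    intro N M n m hNM hnm
    rw [transGR_of, deltaMap_ofAdd]
    simp [ZMod.cast_one hNM]⟩

/-- The element `η = (η_N)_N` of `Λ`. -/
noncomputable def etaL : Lambda :=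
  ⟨fun p => MonoidAlgebra.of (ZMod p.2) (Delta p.1)
      (Multiplicative.ofAdd ((0 : ZMod p.1), (1 : ZMod p.1))), by
    intro N M n m hNM hnm
    rw [transGR_of, deltaMap_ofAdd]
    simp [ZMod.cast_one hNM]⟩

/-!
If `f (1 - x) = 0`, then at every level the component `h = f_{Nn,n}` of `f` is fixed by
multiplication with `g = x_{Nn}`, an element of order `Nn` of `Δ_{Nn}`. Hence `h` is fixed by the
subgroup generated by `g ^ N`, which has order `n` and lies in the kernel of `Δ_{Nn} → Δ_N`.
An element fixed by a finite subgroup is a multiple of the norm element of that subgroup, and this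
norm element maps to `n = 0` in `(ℤ/nℤ)[Δ_N]`. By compatibility, `f_{N,n}` is the image of `h`.
-/

end adelicHGF

lemma QuotientGroup.bijective_out_mul {G : Type*} [Group G] (S : Subgroup G) :
    Function.Bijective fun p : (G ⧸ S) × S => p.1.out * (p.2 : G) := by
  constructor
  · rintro ⟨q, s⟩ ⟨q', s'⟩ he
    have hq : q = q' := by simpa using congrArg (QuotientGroup.mk (s := S)) he
    subst hq
    exact Prod.ext rfl (Subtype.ext (mul_left_cancel he))
  · intro x
    refine ⟨(QuotientGroup.mk x, ⟨(QuotientGroup.mk x : G ⧸ S).out⁻¹ * x, ?_⟩), by simp⟩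
    exact QuotientGroup.leftRel_apply.mp (Quotient.exact' (QuotientGroup.out_eq' _))

namespace MonoidAlgebra

variable {R G : Type*} [Semiring R]

def stabilizer [Group G] (h : MonoidAlgebra R G) : Subgroup G where
  carrier := {s | h * of R G s = h}
  one_mem' := by simp [← one_def]
  mul_mem' {a b} ha hb := by
    simp only [Set.mem_ofPred_eq, map_mul, ← mul_assoc] at ha hb ⊢
    rw [ha, hb]
  inv_mem' {a} ha := by
    simp only [Set.mem_ofPred_eq] at ha ⊢
    conv_lhs => rw [← ha]
    rw [mul_assoc, ← map_mul, mul_inv_cancel, map_one, mul_one]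

lemma mem_stabilizer [Group G] {h : MonoidAlgebra R G} {s : G} :
    s ∈ stabilizer h ↔ h * of R G s = h :=
  Iff.rfl

lemma sum_single_coeff [Fintype G] (h : MonoidAlgebra R G) :
    ∑ x : G, single x (h.coeff x) = h := by
  rw [← coeff_inj, coeff_sum]
  exact Finsupp.univ_sum_single h.coeff

lemma exists_eq_sum_mul_of_le_stabilizer [CommGroup G] [Fintype G] {S : Subgroup G} [Fintype S]
    {h : MonoidAlgebra R G} (hS : S ≤ stabilizer h) : ∃ u, h = (∑ s : S, of R G s) * u := by
  classical
  have hcoeff : ∀ x : G, ∀ s ∈ S, h.coeff (x * s) = h.coeff x := by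
    intro x s hs
    conv_lhs => rw [← mem_stabilizer.mp (hS hs)]
    simp
  refine ⟨∑ q : G ⧸ S, single q.out (h.coeff q.out), ?_⟩
  calc h = ∑ x : G, single x (h.coeff x) := (sum_single_coeff h).symm
    _ = ∑ p : (G ⧸ S) × S, single (p.1.out * p.2) (h.coeff (p.1.out * p.2)) :=
      ((Equiv.ofBijective _ (QuotientGroup.bijective_out_mul S)).sum_comp _).symm
    _ = ∑ p : (G ⧸ S) × S, of R G p.2 * single p.1.out (h.coeff p.1.out) := by
      refine Finset.sum_congr rfl fun p _ => ?_
      rw [hcoeff _ _ p.2.2, of_apply, single_mul_single, one_mul, mul_comm]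
    _ = (∑ s : S, of R G s) * ∑ q : G ⧸ S, single q.out (h.coeff q.out) := by
      rw [Fintype.sum_prod_type, Finset.sum_mul_sum, Finset.sum_comm]

lemma map_eq_zero_of_le_stabilizer [CommGroup G] [Finite G] {A : Type*} [Semiring A]
    (π : MonoidAlgebra R G →+* A) {S : Subgroup G}
    (hπ : S ≤ ((π : MonoidAlgebra R G →* A).comp (of R G)).ker) (hcard : (Nat.card S : A) = 0)
    {h : MonoidAlgebra R G} (hS : S ≤ stabilizer h) : π h = 0 := by
  classical
  have := Fintype.ofFinite G
  obtain ⟨u, rfl⟩ := exists_eq_sum_mul_of_le_stabilizer hS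
  have hone : ∀ s : S, π (of R G s) = 1 := fun s => MonoidHom.mem_ker.mp (hπ s.2)
  rw [map_mul, map_sum, Fintype.sum_congr _ _ hone, Finset.sum_const, Finset.card_univ,
    ← Nat.card_eq_fintype_card, nsmul_one, hcard, zero_mul]

end MonoidAlgebra

namespace adelicHGF

open MonoidAlgebra

lemma delta_pow_eq_one {N : ℕ} (y : Delta N) : y ^ N = 1 := by
  rw [← toAdd_eq_zero, toAdd_pow]
  ext <;> simp

lemma orderOf_ofAdd_one_left {M : ℕ} (b : ZMod M) :
    orderOf (Multiplicative.ofAdd ((1 : ZMod M), b)) = M := by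
  rw [orderOf_ofAdd_eq_addOrderOf, Prod.addOrderOf, ZMod.addOrderOf_one]
  exact Nat.lcm_eq_left (addOrderOf_dvd_of_nsmul_eq_zero (by simp))

lemma orderOf_ofAdd_one_right {M : ℕ} (a : ZMod M) :
    orderOf (Multiplicative.ofAdd (a, (1 : ZMod M))) = M := by
  rw [orderOf_ofAdd_eq_addOrderOf, Prod.addOrderOf, ZMod.addOrderOf_one]
  exact Nat.lcm_eq_right (addOrderOf_dvd_of_nsmul_eq_zero (by simp))

lemma transGR_eq_zero_of_mem_stabilizer {N n : ℕ} [NeZero N] [NeZero n] {g : Delta (N * n)}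
    (hg : orderOf g = N * n) {h : GR (N * n) n} (hh : g ∈ stabilizer h) :
    transGR (dvd_mul_right N n) dvd_rfl h = 0 := by
  refine map_eq_zero_of_le_stabilizer _ (S := Subgroup.zpowers (g ^ N)) ?_ ?_
    (Subgroup.zpowers_le.mpr (pow_mem hh N))
  · rw [Subgroup.zpowers_le, MonoidHom.mem_ker]
    change transGR _ _ (of _ _ (g ^ N)) = 1
    rw [transGR_of, map_pow, delta_pow_eq_one, map_one]
  · rw [Nat.card_zpowers, orderOf_pow_of_dvd (NeZero.ne N) (hg.symm ▸ dvd_mul_right N n), hg,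
      Nat.mul_div_cancel_left _ (Nat.pos_of_neZero N), natCast_def, ZMod.natCast_self, single_zero]

lemma exists_orderOf_eq_and_apply_eq_of {x : Lambda} (hx : x = xiL ∨ x = etaL ∨ x = xiL * etaL)
    (p : ℕ+ × ℕ+) : ∃ g : Delta p.1, orderOf g = p.1 ∧
      (x : ∀ p : ℕ+ × ℕ+, GR p.1 p.2) p = of (ZMod p.2) (Delta p.1) g := by
  rcases hx with rfl | rfl | rfl
  · exact ⟨_, orderOf_ofAdd_one_left 0, rfl⟩
  · exact ⟨_, orderOf_ofAdd_one_right 0, rfl⟩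
  · refine ⟨_, orderOf_ofAdd_one_left 1, ?_⟩
    change of (ZMod p.2) (Delta p.1) (.ofAdd (1, 0)) * of (ZMod p.2) (Delta p.1) (.ofAdd (0, 1)) = _
    rw [← map_mul, ← ofAdd_add, Prod.mk_add_mk, add_zero, zero_add]

/-- **First part of the lemma in Section 3.4**: for `x` any one of `ξ`, `η`, `ξη` in
`Λ = Ẑ[[Δ_∞]]`, the element `1 - x` is a non-zero-divisor of `Λ`: if `f · (1 - x) = 0` then
`f = 0`.  (Equivalently, the cyclic `Λ`-module `Λ(1-x)` is free.) -/
theorem one_sub_x_nonZeroDivisor (x : Lambda) (hx : x = xiL ∨ x = etaL ∨ x = xiL * etaL)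
    (f : Lambda) (hf : f * (1 - x) = 0) : f = 0 := by
  have hfx : ∀ p, (f : ∀ p : ℕ+ × ℕ+, GR p.1 p.2) p * (x : ∀ p : ℕ+ × ℕ+, GR p.1 p.2) p
      = (f : ∀ p : ℕ+ × ℕ+, GR p.1 p.2) p := by
    rw [mul_one_sub, sub_eq_zero] at hf
    exact fun p => (congrFun (congrArg Subtype.val hf) p).symm
  refine Subtype.ext (funext fun ⟨N, n⟩ => ?_)
  obtain ⟨g, hg, hxg⟩ := exists_orderOf_eq_and_apply_eq_of hx (N * n, n)
  rw [← f.2 N (N * n) n n (dvd_mul_right _ _) dvd_rfl]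
  exact transGR_eq_zero_of_mem_stabilizer (N := N) (n := n) hg
    (mem_stabilizer.mpr (hxg ▸ hfx (N * n, n)))

end adelicHGF
end

section
/- For all positive integers N, m, n with n dividing m, the composite ring homomorphism ℤ[Δ_{mN}] → ℤ[Δ_N] → (ℤ/nℤ)[Δ_N] (induced by the reduction map Δ_{mN} → Δ_N followed by reduction of coefficients modulo n) maps the ideal I_{mN} to zero; in other words, the transition map between the images of these ideals with ℤ/nℤ-coefficients is trivial whenever n ∣ m. (Mittag-Leffler claim established in the proof of Lemma 3.1 of the paper.) -/
namespace adelicHGF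

/-- Reduction of coefficients modulo `n`: the ring homomorphism
`ℤ[Δ_N] → (ℤ/nℤ)[Δ_N]`. -/
noncomputable def redCoeff (N n : ℕ) :
    MonoidAlgebra ℤ (Delta N) →+* MonoidAlgebra (ZMod n) (Delta N) :=
  MonoidAlgebra.liftNCRingHom
    ((MonoidAlgebra.singleOneRingHom).comp (Int.castRingHom (ZMod n)))
    (MonoidAlgebra.of (ZMod n) (Delta N))
    (fun _ _ => Commute.all _ _)

/-- The element `∑_{i ∈ ℤ/Nℤ} ξ_N^i` of the group ring `ℤ[Δ_N]`. -/
noncomputable def sumXi (N : ℕ) [NeZero N] : MonoidAlgebra ℤ (Delta N) :=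
  ∑ i : ZMod N, MonoidAlgebra.of ℤ (Delta N) (Multiplicative.ofAdd (i, (0 : ZMod N)))

/-- The element `∑_{j ∈ ℤ/Nℤ} η_N^j` of the group ring `ℤ[Δ_N]`. -/
noncomputable def sumEta (N : ℕ) [NeZero N] : MonoidAlgebra ℤ (Delta N) :=
  ∑ j : ZMod N, MonoidAlgebra.of ℤ (Delta N) (Multiplicative.ofAdd ((0 : ZMod N), j))

/-- The ideal `I_N ⊆ ℤ[Δ_N]` generated by `∑_i ξ_N^i` and `∑_j η_N^j`. -/
noncomputable def IN (N : ℕ) [NeZero N] : Ideal (MonoidAlgebra ℤ (Delta N)) :=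
  Ideal.span {sumXi N, sumEta N}

lemma sum_zmod_eq_sum_range {M : ℕ} [NeZero M] {A : Type*} [AddCommMonoid A] (h : ZMod M → A) :
    ∑ i : ZMod M, h i = ∑ k ∈ Finset.range M, h (k : ZMod M) := by
  refine Finset.sum_nbij' (fun i => i.val) (fun k => (k : ZMod M)) ?_ ?_ ?_ ?_ ?_
  · intro i _; exact Finset.mem_range.mpr i.val_lt
  · intro k _; exact Finset.mem_univ _
  · intro i _; exact ZMod.natCast_rightInverse i
  · intro k hk; exact ZMod.val_cast_of_lt (Finset.mem_range.mp hk)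
  · intro i _; rw [ZMod.natCast_rightInverse i]

lemma sum_range_mul_periodic {A : Type*} [AddCommMonoid A] (g : ℕ → A) (N : ℕ)
    (hg : ∀ k, g (k + N) = g k) (m : ℕ) :
    ∑ k ∈ Finset.range (m * N), g k = m • ∑ k ∈ Finset.range N, g k := by
  induction m with
  | zero => simp
  | succ m ih =>
      have hper : ∀ i, g (m * N + i) = g i := by
        intro i
        clear ih
        induction m with
        | zero => simp
        | succ m ihm =>
            have h1 : (m + 1) * N + i = (m * N + i) + N := by ring
            rw [h1, hg, ihm]
      rw [Nat.succ_mul, Finset.sum_range_add, ih, succ_nsmul]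
      congr 1
      exact Finset.sum_congr rfl fun i _ => hper i

lemma sum_cast_eq (N m : ℕ) [NeZero N] [NeZero (m * N)] {A : Type*} [AddCommMonoid A]
    (h : ZMod N → A) :
    ∑ i : ZMod (m * N), h (ZMod.castHom (dvd_mul_left N m) (ZMod N) i)
      = m • ∑ j : ZMod N, h j := by
  rw [sum_zmod_eq_sum_range, sum_zmod_eq_sum_range]
  have hc : ∀ k : ℕ,
      ZMod.castHom (dvd_mul_left N m) (ZMod N) ((k : ZMod (m * N))) = (k : ZMod N) :=
    fun k => map_natCast _ k
  simp_rw [hc]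
  exact sum_range_mul_periodic (fun k => h (k : ZMod N)) N (fun k => by simp) m

/-- **Mittag-Leffler claim in the proof of Lemma 3.1**: for positive integers `N`, `m`, `n`
with `n ∣ m`, the composite ring homomorphism `ℤ[Δ_{mN}] → ℤ[Δ_N] → (ℤ/nℤ)[Δ_N]` (reduction
`Δ_{mN} → Δ_N` followed by reduction of coefficients modulo `n`) maps `I_{mN}` to zero. -/
theorem transitionMap_IN_eq_zero (N m n : ℕ) [NeZero N] [NeZero m] [NeZero n] [NeZero (m * N)]
    (hnm : n ∣ m) (f : MonoidAlgebra ℤ (Delta (m * N))) (hf : f ∈ IN (m * N)) :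
    ((redCoeff N n).comp
        (MonoidAlgebra.mapDomainRingHom ℤ (deltaMap (dvd_mul_left N m)))) f = 0 := by
  set Φ := (redCoeff N n).comp
      (MonoidAlgebra.mapDomainRingHom ℤ (deltaMap (dvd_mul_left N m))) with hΦ
  have hof : ∀ a : Delta (m * N),
      Φ (MonoidAlgebra.of ℤ (Delta (m * N)) a)
        = MonoidAlgebra.of (ZMod n) (Delta N) (deltaMap (dvd_mul_left N m) a) := by
    intro a
    simp [hΦ, redCoeff, MonoidAlgebra.liftNCRingHom, MonoidAlgebra.of_apply,
      MonoidAlgebra.mapDomainRingHom, Finsupp.mapDomain_single, MonoidAlgebra.liftNC_single,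
      MonoidAlgebra.singleOneRingHom, MonoidAlgebra.single_mul_single]
  have hm0 : (m : ZMod n) = 0 := (ZMod.natCast_eq_zero_iff m n).mpr hnm
  have hsmul : ∀ x : MonoidAlgebra (ZMod n) (Delta N), m • x = 0 := by
    intro x
    rw [← Nat.cast_smul_eq_nsmul (ZMod n), hm0, zero_smul]
  have hXi : Φ (sumXi (m * N)) = 0 := by
    rw [sumXi, map_sum]
    have he : ∀ i : ZMod (m * N),
        Φ (MonoidAlgebra.of ℤ (Delta (m * N)) (Multiplicative.ofAdd (i, (0 : ZMod (m * N)))))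
          = (fun j : ZMod N => MonoidAlgebra.of (ZMod n) (Delta N)
              (Multiplicative.ofAdd (j, (0 : ZMod N))))
            (ZMod.castHom (dvd_mul_left N m) (ZMod N) i) := by
      intro i
      rw [hof]
      simp [deltaMap]
    simp_rw [he]
    exact (sum_cast_eq N m (fun j : ZMod N => MonoidAlgebra.of (ZMod n) (Delta N)
      (Multiplicative.ofAdd (j, (0 : ZMod N))))).trans (hsmul _)
  have hEta : Φ (sumEta (m * N)) = 0 := by
    rw [sumEta, map_sum]
    have he : ∀ i : ZMod (m * N),
        Φ (MonoidAlgebra.of ℤ (Delta (m * N)) (Multiplicative.ofAdd ((0 : ZMod (m * N)), i)))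
          = (fun j : ZMod N => MonoidAlgebra.of (ZMod n) (Delta N)
              (Multiplicative.ofAdd ((0 : ZMod N), j)))
            (ZMod.castHom (dvd_mul_left N m) (ZMod N) i) := by
      intro i
      rw [hof]
      simp [deltaMap]
    simp_rw [he]
    exact (sum_cast_eq N m (fun j : ZMod N => MonoidAlgebra.of (ZMod n) (Delta N)
      (Multiplicative.ofAdd ((0 : ZMod N), j)))).trans (hsmul _)
  have hle : IN (m * N) ≤ RingHom.ker Φ := by
    rw [IN, Ideal.span_le]
    rintro x hx
    simp only [Set.mem_insert_iff, Set.mem_singleton_iff] at hx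
    rcases hx with rfl | rfl
    · exact hXi
    · exact hEta
  exact hle hf

end adelicHGF
end
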